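/- Suppose every third-order partial derivative of the Walker metric functions A, B, C involving only the variables v and V vanishes, i.e. ∂_v^i ∂_V^j F = 0 for each F ∈ {A, B, C} and all i + j = 3. Let μ : ℝ⁴ → ℝ be smooth with ∂_v^i ∂_V^j μ = 0 for all i + j = 2. Then for every n ≥ 1, every composition (in any order) of n + 1 operators taken from {∂_v, ∂_V} and n − 1 operators taken from {D', δ} annihilates μ, where D' = ∂_u − A ∂_v − (1/2) C ∂_V and δ = −∂_U + B ∂_V + (1/2) C ∂_v. -/

import Mathlib

noncomputable section

/-- Real-valued functions on ℝ⁴, with coordinates `x 0 = u`, `x 1 = v`, `x 2 = U`, `x 3 = V`. -/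
abbrev Fn : Type := (Fin 4 → ℝ) → ℝ

/-- Partial derivative in the `i`-th coordinate direction. -/
def pd (i : Fin 4) (f : Fn) : Fn :=
  fun x => lineDeriv ℝ f x (Pi.single i 1)

/-- ∂/∂u -/ def pu : Fn → Fn := pd 0
/-- ∂/∂v -/ def pv : Fn → Fn := pd 1
/-- ∂/∂U -/ def pU : Fn → Fn := pd 2
/-- ∂/∂V -/ def pV : Fn → Fn := pd 3

/-- The frame directional derivative D' = ∂_u − A ∂_v − (1/2) C ∂_V. -/
def Dp (A C : Fn) (f : Fn) : Fn :=
  fun x => pu f x - A x * pv f x - (1/2) * C x * pV f x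

/-- The frame directional derivative δ = −∂_U + B ∂_V + (1/2) C ∂_v. -/
def delta (B C : Fn) (f : Fn) : Fn :=
  fun x => -(pU f x) + B x * pV f x + (1/2) * C x * pv f x

/-- Interpretation of operator tokens: `0 ↦ ∂_v`, `1 ↦ ∂_V`, `2 ↦ D'`, `3 ↦ δ`. -/
def opOf (A B C : Fn) : Fin 4 → (Fn → Fn) := ![pv, pV, Dp A C, delta B C]

/-- Apply a list of operator tokens (composition, leftmost applied last). -/
def applyOps (A B C : Fn) (L : List (Fin 4)) (f : Fn) : Fn :=
  L.foldr (fun t g => opOf A B C t g) f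

namespace Stmt8Aux

lemma pd_eq_fderiv {f : Fn} {x} (hf : DifferentiableAt ℝ f x) (i : Fin 4) :
    pd i f x = fderiv ℝ f x (Pi.single i 1) := hf.lineDeriv_eq_fderiv

lemma smooth_diff {f : Fn} (hf : ContDiff ℝ (⊤ : ℕ∞) f) (x) : DifferentiableAt ℝ f x :=
  (hf.differentiable (by simp)).differentiableAt

lemma fderiv_smooth {f : Fn} (hf : ContDiff ℝ (⊤ : ℕ∞) f) : ContDiff ℝ (⊤ : ℕ∞) (fderiv ℝ f) :=
  hf.fderiv_right (by simp)

lemma pd_contDiff {f : Fn} (hf : ContDiff ℝ (⊤ : ℕ∞) f) (i : Fin 4) : ContDiff ℝ (⊤ : ℕ∞) (pd i f) := by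
  have h : pd i f = fun x => fderiv ℝ f x (Pi.single i 1) :=
    funext fun x => pd_eq_fderiv (smooth_diff hf x) i
  rw [h]
  exact (fderiv_smooth hf).clm_apply contDiff_const

lemma pd_snd {f : Fn} (hf : ContDiff ℝ (⊤ : ℕ∞) f) (i j : Fin 4) (x) :
    pd i (pd j f) x = fderiv ℝ (fderiv ℝ f) x (Pi.single i 1) (Pi.single j 1) := by
  have hdf := fderiv_smooth hf
  have h : pd j f = fun y => fderiv ℝ f y (Pi.single j 1) :=
    funext fun y => pd_eq_fderiv (smooth_diff hf y) j
  have hder : HasFDerivAt (fun y => fderiv ℝ f y (Pi.single j 1))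
      ((fderiv ℝ (fderiv ℝ f) x).flip (Pi.single j 1)) x := by
    have hconst : HasFDerivAt (fun _ : Fin 4 → ℝ => (Pi.single j 1 : Fin 4 → ℝ))
        (0 : (Fin 4 → ℝ) →L[ℝ] (Fin 4 → ℝ)) x := hasFDerivAt_const _ x
    have h2 : HasFDerivAt (fun y => (fderiv ℝ f y) (Pi.single j 1))
        (((fderiv ℝ f x).comp (0 : (Fin 4 → ℝ) →L[ℝ] (Fin 4 → ℝ))) +
          (fderiv ℝ (fderiv ℝ f) x).flip (Pi.single j 1)) x :=
      HasFDerivAt.clm_apply ((hdf.differentiable (by simp) x).hasFDerivAt) hconst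
    simpa using h2
  have hdiff : DifferentiableAt ℝ (pd j f) x := by rw [h]; exact hder.differentiableAt
  rw [pd_eq_fderiv hdiff i, h, hder.fderiv]
  rfl

lemma pd_comm {f : Fn} (hf : ContDiff ℝ (⊤ : ℕ∞) f) (i j : Fin 4) (x) :
    pd i (pd j f) x = pd j (pd i f) x := by
  rw [pd_snd hf i j, pd_snd hf j i]
  have H1 : ∀ y, HasFDerivAt f (fderiv ℝ f y) y := fun y => (smooth_diff hf y).hasFDerivAt
  have H2 : HasFDerivAt (fderiv ℝ f) (fderiv ℝ (fderiv ℝ f) x) x :=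
    ((fderiv_smooth hf).differentiable (by simp) x).hasFDerivAt
  exact second_derivative_symmetric H1 H2 _ _

lemma pd_zeroFn {f : Fn} (h : ∀ y, f y = 0) (i : Fin 4) (x) : pd i f x = 0 := by
  have hf : f = fun _ => (0:ℝ) := funext h
  rw [hf, pd_eq_fderiv (differentiableAt_const 0) i]
  simp

lemma pd_add {g1 g2 : Fn} {x} (h1 : DifferentiableAt ℝ g1 x) (h2 : DifferentiableAt ℝ g2 x)
    (i : Fin 4) : pd i (fun y => g1 y + g2 y) x = pd i g1 x + pd i g2 x := by
  rw [pd_eq_fderiv (f := fun y => g1 y + g2 y) (h1.add h2) i, pd_eq_fderiv h1 i, pd_eq_fderiv h2 i, fderiv_fun_add h1 h2]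
  rfl

lemma pd_sub {g1 g2 : Fn} {x} (h1 : DifferentiableAt ℝ g1 x) (h2 : DifferentiableAt ℝ g2 x)
    (i : Fin 4) : pd i (fun y => g1 y - g2 y) x = pd i g1 x - pd i g2 x := by
  rw [pd_eq_fderiv (f := fun y => g1 y - g2 y) (h1.sub h2) i, pd_eq_fderiv h1 i, pd_eq_fderiv h2 i, fderiv_fun_sub h1 h2]
  rfl

lemma pd_mul {g1 g2 : Fn} {x} (h1 : DifferentiableAt ℝ g1 x) (h2 : DifferentiableAt ℝ g2 x)
    (i : Fin 4) : pd i (fun y => g1 y * g2 y) x = pd i g1 x * g2 x + g1 x * pd i g2 x := by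
  rw [pd_eq_fderiv (f := fun y => g1 y * g2 y) (h1.mul h2) i, pd_eq_fderiv h1 i, pd_eq_fderiv h2 i, fderiv_fun_mul h1 h2]
  simp [ContinuousLinearMap.add_apply, ContinuousLinearMap.smul_apply, smul_eq_mul]
  ring

lemma pd_const_mul {g : Fn} {x} (h : DifferentiableAt ℝ g x) (c : ℝ) (i : Fin 4) :
    pd i (fun y => c * g y) x = c * pd i g x := by
  rw [pd_eq_fderiv (h.const_mul c) i, pd_eq_fderiv h i, fderiv_const_mul h c]
  rfl

lemma iter_contDiff (a : Fin 4) : ∀ (n : ℕ) {f : Fn}, ContDiff ℝ (⊤ : ℕ∞) f →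
    ContDiff ℝ (⊤ : ℕ∞) ((pd a)^[n] f)
  | 0, _, hf => hf
  | (n+1), f, hf => by
      rw [Function.iterate_succ_apply]
      exact iter_contDiff a n (pd_contDiff hf a)

lemma iter_zeroFn (a : Fin 4) : ∀ (n : ℕ) {f : Fn}, (∀ y, f y = 0) → ∀ x, (pd a)^[n] f x = 0
  | 0, _, hf, x => hf x
  | (n+1), f, hf, x => by
      rw [Function.iterate_succ_apply]
      exact iter_zeroFn a n (fun y => pd_zeroFn hf a y) x

lemma iter_comm (a m : Fin 4) : ∀ (n : ℕ) {f : Fn}, ContDiff ℝ (⊤ : ℕ∞) f →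
    ∀ x, (pd a)^[n] (pd m f) x = pd m ((pd a)^[n] f) x
  | 0, _, _, _ => rfl
  | (n+1), f, hf, x => by
      rw [Function.iterate_succ_apply, Function.iterate_succ_apply]
      have h1 : pd a (pd m f) = pd m (pd a f) := funext fun y => pd_comm hf a m y
      rw [h1]
      exact iter_comm a m n (pd_contDiff hf a) x

lemma iter_add (a : Fin 4) : ∀ (n : ℕ) {g1 g2 : Fn}, ContDiff ℝ (⊤ : ℕ∞) g1 → ContDiff ℝ (⊤ : ℕ∞) g2 →
    ∀ x, (pd a)^[n] (fun y => g1 y + g2 y) x = (pd a)^[n] g1 x + (pd a)^[n] g2 x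
  | 0, _, _, _, _, _ => rfl
  | (n+1), g1, g2, h1, h2, x => by
      rw [Function.iterate_succ_apply, Function.iterate_succ_apply,
        Function.iterate_succ_apply]
      have h : pd a (fun y => g1 y + g2 y) = fun y => pd a g1 y + pd a g2 y :=
        funext fun y => pd_add (smooth_diff h1 y) (smooth_diff h2 y) a
      rw [h]
      exact iter_add a n (pd_contDiff h1 a) (pd_contDiff h2 a) x

lemma iter_const_mul (a : Fin 4) : ∀ (n : ℕ) {g : Fn}, ContDiff ℝ (⊤ : ℕ∞) g → ∀ (c : ℝ),
    ∀ x, (pd a)^[n] (fun y => c * g y) x = c * (pd a)^[n] g x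
  | 0, _, _, _, _ => rfl
  | (n+1), g, hg, c, x => by
      rw [Function.iterate_succ_apply, Function.iterate_succ_apply]
      have h : pd a (fun y => c * g y) = fun y => c * pd a g y :=
        funext fun y => pd_const_mul (smooth_diff hg y) c a
      rw [h]
      exact iter_const_mul a n (pd_contDiff hg a) c x

/-- All pure (v,V)-derivatives of total order `k` vanish. -/
def Qd (k : ℕ) (f : Fn) : Prop :=
  ∀ i j : ℕ, i + j = k → ∀ x, (pd 1)^[i] ((pd 3)^[j] f) x = 0

lemma Qd.zeroFn {f : Fn} (h : Qd 0 f) : ∀ x, f x = 0 := fun x => h 0 0 rfl x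

lemma Qd.of_zero {f : Fn} (h : ∀ x, f x = 0) (k : ℕ) : Qd k f := by
  intro i j _ x
  exact iter_zeroFn 1 i (fun y => iter_zeroFn 3 j h y) x

lemma Qd.mono {f : Fn} {k : ℕ} (h : Qd k f) : Qd (k+1) f := by
  intro i j hij x
  cases i with
  | zero =>
    have hj : j = k + 1 := by omega
    subst hj
    show (pd 3)^[k+1] f x = 0
    rw [Function.iterate_succ_apply']
    exact pd_zeroFn (fun y => h 0 k (by omega) y) 3 x
  | succ i' =>
    rw [Function.iterate_succ_apply']
    exact pd_zeroFn (fun y => h i' j (by omega) y) 1 x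

lemma Qd.pV {f : Fn} {k : ℕ} (h : Qd (k+1) f) : Qd k (pd 3 f) := by
  intro i j hij x
  rw [← Function.iterate_succ_apply]
  exact h i (j+1) (by omega) x

lemma Qd.pv {f : Fn} {k : ℕ} (hf : ContDiff ℝ (⊤ : ℕ∞) f) (h : Qd (k+1) f) : Qd k (pd 1 f) := by
  intro i j hij x
  have hc : (pd 3)^[j] (pd 1 f) = pd 1 ((pd 3)^[j] f) := funext fun y => iter_comm 3 1 j hf y
  rw [hc, ← Function.iterate_succ_apply]
  exact h (i+1) j (by omega) x

lemma Qd.pdAny {f : Fn} {k : ℕ} (m : Fin 4) (hf : ContDiff ℝ (⊤ : ℕ∞) f) (h : Qd k f) : Qd k (pd m f) := by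
  intro i j hij x
  have hc1 : (pd 3)^[j] (pd m f) = pd m ((pd 3)^[j] f) := funext fun y => iter_comm 3 m j hf y
  rw [hc1, iter_comm 1 m i (iter_contDiff 3 j hf) x]
  exact pd_zeroFn (fun y => h i j hij y) m x

lemma Qd.add {f g : Fn} {k : ℕ} (hf : ContDiff ℝ (⊤ : ℕ∞) f) (hg : ContDiff ℝ (⊤ : ℕ∞) g)
    (h1 : Qd k f) (h2 : Qd k g) : Qd k (fun y => f y + g y) := by
  intro i j hij x
  have e1 : (pd 3)^[j] (fun y => f y + g y) = fun y => (pd 3)^[j] f y + (pd 3)^[j] g y :=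
    funext fun y => iter_add 3 j hf hg y
  rw [e1, iter_add 1 i (iter_contDiff 3 j hf) (iter_contDiff 3 j hg) x,
    h1 i j hij x, h2 i j hij x, add_zero]

lemma Qd.const_mul {f : Fn} {k : ℕ} (hf : ContDiff ℝ (⊤ : ℕ∞) f) (c : ℝ) (h : Qd k f) :
    Qd k (fun y => c * f y) := by
  intro i j hij x
  have e1 : (pd 3)^[j] (fun y => c * f y) = fun y => c * (pd 3)^[j] f y :=
    funext fun y => iter_const_mul 3 j hf c y
  rw [e1, iter_const_mul 1 i (iter_contDiff 3 j hf) c x, h i j hij x, mul_zero]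

lemma Qd.neg {f : Fn} {k : ℕ} (hf : ContDiff ℝ (⊤ : ℕ∞) f) (h : Qd k f) : Qd k (fun y => -(f y)) := by
  have e : (fun y => -(f y)) = fun y => (-1 : ℝ) * f y := funext fun y => by ring
  rw [e]
  exact h.const_mul hf (-1)

lemma Qd.sub {f g : Fn} {k : ℕ} (hf : ContDiff ℝ (⊤ : ℕ∞) f) (hg : ContDiff ℝ (⊤ : ℕ∞) g)
    (h1 : Qd k f) (h2 : Qd k g) : Qd k (fun y => f y - g y) := by
  have e : (fun y => f y - g y) = fun y => f y + (-1 : ℝ) * g y := funext fun y => by ring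
  rw [e]
  exact h1.add hf (contDiff_const.mul hg) (h2.const_mul hg (-1))

lemma Qd.mul : ∀ (k : ℕ) {f g : Fn} (p q : ℕ), ContDiff ℝ (⊤ : ℕ∞) f → ContDiff ℝ (⊤ : ℕ∞) g →
    Qd p f → Qd q g → p + q ≤ k + 1 → Qd k (fun y => f y * g y) := by
  intro k
  induction k with
  | zero =>
    intro f g p q _ _ hp hq hpq
    rcases (by omega : p = 0 ∨ q = 0) with h | h
    · subst h; exact Qd.of_zero (fun x => by rw [hp.zeroFn x, zero_mul]) 0
    · subst h; exact Qd.of_zero (fun x => by rw [hq.zeroFn x, mul_zero]) 0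
  | succ k IH =>
    intro f g p q hf hg hp hq hpq
    rcases Nat.eq_zero_or_pos p with hp0 | hppos
    · subst hp0; exact Qd.of_zero (fun x => by rw [hp.zeroFn x, zero_mul]) (k+1)
    rcases Nat.eq_zero_or_pos q with hq0 | hqpos
    · subst hq0; exact Qd.of_zero (fun x => by rw [hq.zeroFn x, mul_zero]) (k+1)
    have hp' : Qd (p-1) (pd 3 f) := Qd.pV (by rwa [Nat.sub_add_cancel hppos])
    have hq' : Qd (q-1) (pd 3 g) := Qd.pV (by rwa [Nat.sub_add_cancel hqpos])
    have hp'' : Qd (p-1) (pd 1 f) := Qd.pv hf (by rwa [Nat.sub_add_cancel hppos])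
    have hq'' : Qd (q-1) (pd 1 g) := Qd.pv hg (by rwa [Nat.sub_add_cancel hqpos])
    intro i j hij x
    cases j with
    | succ j' =>
      rw [Function.iterate_succ_apply]
      have e : pd 3 (fun y => f y * g y) =
          fun y => (pd 3 f y * g y) + (f y * pd 3 g y) :=
        funext fun y => pd_mul (smooth_diff hf y) (smooth_diff hg y) 3
      rw [e]
      have ht1 : Qd k (fun y => pd 3 f y * g y) :=
        IH (p-1) q (pd_contDiff hf 3) hg hp' hq (by omega)
      have ht2 : Qd k (fun y => f y * pd 3 g y) :=
        IH p (q-1) hf (pd_contDiff hg 3) hp hq' (by omega)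
      have hQ : Qd k (fun y => (pd 3 f y * g y) + (f y * pd 3 g y)) :=
        Qd.add ((pd_contDiff hf 3).mul hg) (hf.mul (pd_contDiff hg 3)) ht1 ht2
      exact hQ i j' (by omega) x
    | zero =>
      have hi : i = k + 1 := by omega
      subst hi
      show (pd 1)^[k+1] (fun y => f y * g y) x = 0
      rw [Function.iterate_succ_apply]
      have e : pd 1 (fun y => f y * g y) =
          fun y => (pd 1 f y * g y) + (f y * pd 1 g y) :=
        funext fun y => pd_mul (smooth_diff hf y) (smooth_diff hg y) 1
      rw [e]
      have ht1 : Qd k (fun y => pd 1 f y * g y) :=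
        IH (p-1) q (pd_contDiff hf 1) hg hp'' hq (by omega)
      have ht2 : Qd k (fun y => f y * pd 1 g y) :=
        IH p (q-1) hf (pd_contDiff hg 1) hp hq'' (by omega)
      have hQ : Qd k (fun y => (pd 1 f y * g y) + (f y * pd 1 g y)) :=
        Qd.add ((pd_contDiff hf 1).mul hg) (hf.mul (pd_contDiff hg 1)) ht1 ht2
      exact hQ k 0 (by omega) x

lemma Qd.cast {f : Fn} {k k' : ℕ} (h : Qd k f) (e : k' = k) : Qd k' f := e ▸ h

section ops

variable {A B C g : Fn}

lemma Dp_contDiff (hA : ContDiff ℝ (⊤ : ℕ∞) A) (hC : ContDiff ℝ (⊤ : ℕ∞) C) (hg : ContDiff ℝ (⊤ : ℕ∞) g) : ContDiff ℝ (⊤ : ℕ∞) (Dp A C g) :=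
  ((pd_contDiff hg 0).sub (hA.mul (pd_contDiff hg 1))).sub
    ((contDiff_const.mul hC).mul (pd_contDiff hg 3))

lemma delta_contDiff (hB : ContDiff ℝ (⊤ : ℕ∞) B) (hC : ContDiff ℝ (⊤ : ℕ∞) C) (hg : ContDiff ℝ (⊤ : ℕ∞) g) : ContDiff ℝ (⊤ : ℕ∞) (delta B C g) :=
  (((pd_contDiff hg 2).neg).add (hB.mul (pd_contDiff hg 3))).add
    ((contDiff_const.mul hC).mul (pd_contDiff hg 1))

lemma Dp_zeroFn (h : ∀ x, g x = 0) : ∀ x, Dp A C g x = 0 := by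
  intro x
  show pd 0 g x - A x * pd 1 g x - 1/2 * C x * pd 3 g x = 0
  rw [pd_zeroFn h 0 x, pd_zeroFn h 1 x, pd_zeroFn h 3 x]
  ring

lemma delta_zeroFn (h : ∀ x, g x = 0) : ∀ x, delta B C g x = 0 := by
  intro x
  show -(pd 2 g x) + B x * pd 3 g x + 1/2 * C x * pd 1 g x = 0
  rw [pd_zeroFn h 2 x, pd_zeroFn h 3 x, pd_zeroFn h 1 x]
  ring

lemma Qd.Dp_succ {k : ℕ} (hA : ContDiff ℝ (⊤ : ℕ∞) A) (hC : ContDiff ℝ (⊤ : ℕ∞) C) (qA : Qd 3 A) (qC : Qd 3 C) (hg : ContDiff ℝ (⊤ : ℕ∞) g)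
    (hq : Qd (k+1) g) : Qd (k+2) (Dp A C g) := by
  have h1 : Qd (k+2) (pd 0 g) := (hq.pdAny 0 hg).mono
  have hpv : Qd k (pd 1 g) := hq.pv hg
  have hpV : Qd k (pd 3 g) := hq.pV
  have h2 : Qd (k+2) (fun x => A x * pd 1 g x) :=
    Qd.mul (k+2) 3 k hA (pd_contDiff hg 1) qA hpv (by omega)
  have h3 : Qd (k+2) (fun x => 1/2 * C x * pd 3 g x) := by
    have qC' : Qd 3 (fun x => 1/2 * C x) := qC.const_mul hC (1/2)
    exact Qd.mul (k+2) 3 k (contDiff_const.mul hC) (pd_contDiff hg 3) qC' hpV (by omega)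
  exact Qd.sub ((pd_contDiff hg 0).sub (hA.mul (pd_contDiff hg 1)))
    ((contDiff_const.mul hC).mul (pd_contDiff hg 3))
    (Qd.sub (pd_contDiff hg 0) (hA.mul (pd_contDiff hg 1)) h1 h2) h3

lemma Qd.delta_succ {k : ℕ} (hB : ContDiff ℝ (⊤ : ℕ∞) B) (hC : ContDiff ℝ (⊤ : ℕ∞) C) (qB : Qd 3 B) (qC : Qd 3 C) (hg : ContDiff ℝ (⊤ : ℕ∞) g)
    (hq : Qd (k+1) g) : Qd (k+2) (delta B C g) := by
  have h1 : Qd (k+2) (fun x => -(pd 2 g x)) := ((hq.pdAny 2 hg).mono).neg (pd_contDiff hg 2)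
  have hpv : Qd k (pd 1 g) := hq.pv hg
  have hpV : Qd k (pd 3 g) := hq.pV
  have h2 : Qd (k+2) (fun x => B x * pd 3 g x) :=
    Qd.mul (k+2) 3 k hB (pd_contDiff hg 3) qB hpV (by omega)
  have h3 : Qd (k+2) (fun x => 1/2 * C x * pd 1 g x) := by
    have qC' : Qd 3 (fun x => 1/2 * C x) := qC.const_mul hC (1/2)
    exact Qd.mul (k+2) 3 k (contDiff_const.mul hC) (pd_contDiff hg 1) qC' hpv (by omega)
  exact Qd.add (((pd_contDiff hg 2).neg).add (hB.mul (pd_contDiff hg 3)))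
    ((contDiff_const.mul hC).mul (pd_contDiff hg 1))
    (Qd.add ((pd_contDiff hg 2).neg) (hB.mul (pd_contDiff hg 3)) h1 h2) h3

lemma Qd.pv' {k : ℕ} (hg : ContDiff ℝ (⊤ : ℕ∞) g) (h : Qd k g) : Qd (k-1) (pd 1 g) := by
  cases k with
  | zero => exact Qd.of_zero (fun x => pd_zeroFn h.zeroFn 1 x) 0
  | succ m => exact h.pv hg

lemma Qd.pV' {k : ℕ} (h : Qd k g) : Qd (k-1) (pd 3 g) := by
  cases k with
  | zero => exact Qd.of_zero (fun x => pd_zeroFn h.zeroFn 3 x) 0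
  | succ m => exact h.pV

lemma Qd.Dp' {k : ℕ} (hA : ContDiff ℝ (⊤ : ℕ∞) A) (hC : ContDiff ℝ (⊤ : ℕ∞) C) (qA : Qd 3 A) (qC : Qd 3 C) (hg : ContDiff ℝ (⊤ : ℕ∞) g)
    (h : Qd k g) : Qd (k+1) (Dp A C g) := by
  cases k with
  | zero => exact Qd.of_zero (Dp_zeroFn h.zeroFn) 1
  | succ m => exact Qd.Dp_succ hA hC qA qC hg h

lemma Qd.delta' {k : ℕ} (hB : ContDiff ℝ (⊤ : ℕ∞) B) (hC : ContDiff ℝ (⊤ : ℕ∞) C) (qB : Qd 3 B) (qC : Qd 3 C) (hg : ContDiff ℝ (⊤ : ℕ∞) g)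
    (h : Qd k g) : Qd (k+1) (delta B C g) := by
  cases k with
  | zero => exact Qd.of_zero (delta_zeroFn h.zeroFn) 1
  | succ m => exact Qd.delta_succ hB hC qB qC hg h

end ops

lemma main (A B C : Fn)
    (hA : ContDiff ℝ (⊤ : ℕ∞) A) (hB : ContDiff ℝ (⊤ : ℕ∞) B) (hC : ContDiff ℝ (⊤ : ℕ∞) C)
    (qA : Qd 3 A) (qB : Qd 3 B) (qC : Qd 3 C)
    (μ : Fn) (hμ : ContDiff ℝ (⊤ : ℕ∞) μ) (qμ : Qd 2 μ) :
    ∀ L : List (Fin 4), ContDiff ℝ (⊤ : ℕ∞) (applyOps A B C L μ) ∧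
      Qd (2 + (L.count 2 + L.count 3) - (L.count 0 + L.count 1)) (applyOps A B C L μ) := by
  intro L
  induction L with
  | nil => exact ⟨hμ, qμ⟩
  | cons t L' ih =>
    obtain ⟨hg, hQ⟩ := ih
    fin_cases t
    · refine ⟨pd_contDiff hg 1, Qd.cast (hQ.pv' hg) ?_⟩
      simp [List.count_cons]
      omega
    · refine ⟨pd_contDiff hg 3, Qd.cast hQ.pV' ?_⟩
      simp [List.count_cons]
      omega
    · refine ⟨Dp_contDiff hA hC hg, ?_⟩
      rcases Nat.eq_zero_or_pos
          (2 + (L'.count 2 + L'.count 3) - (L'.count 0 + L'.count 1)) with h0 | hpos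
      · exact Qd.of_zero (Dp_zeroFn (Qd.zeroFn (by rwa [h0] at hQ))) _
      · refine Qd.cast (Qd.Dp' hA hC qA qC hg hQ) ?_
        simp [List.count_cons]
        omega
    · refine ⟨delta_contDiff hB hC hg, ?_⟩
      rcases Nat.eq_zero_or_pos
          (2 + (L'.count 2 + L'.count 3) - (L'.count 0 + L'.count 1)) with h0 | hpos
      · exact Qd.of_zero (delta_zeroFn (Qd.zeroFn (by rwa [h0] at hQ))) _
      · refine Qd.cast (Qd.delta' hB hC qB qC hg hQ) ?_
        simp [List.count_cons]
        omega

end Stmt8Aux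

open Stmt8Aux in
/-- with all pure third (v,V)-derivatives of A, B, C vanishing and all
second (v,V)-derivatives of μ vanishing, any composition of n+1 operators from
{∂_v, ∂_V} and n−1 operators from {D', δ} annihilates μ. -/
theorem stmt8 (A B C : Fn)
    (hA : ContDiff ℝ (⊤ : ℕ∞) A) (hB : ContDiff ℝ (⊤ : ℕ∞) B) (hC : ContDiff ℝ (⊤ : ℕ∞) C)
    (h3A : ∀ i j : ℕ, i + j = 3 → ∀ x, (pv^[i] (pV^[j] A)) x = 0)
    (h3B : ∀ i j : ℕ, i + j = 3 → ∀ x, (pv^[i] (pV^[j] B)) x = 0)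
    (h3C : ∀ i j : ℕ, i + j = 3 → ∀ x, (pv^[i] (pV^[j] C)) x = 0)
    (μ : Fn) (hμ : ContDiff ℝ (⊤ : ℕ∞) μ)
    (hμ2 : ∀ i j : ℕ, i + j = 2 → ∀ x, (pv^[i] (pV^[j] μ)) x = 0)
    (n : ℕ) (hn : 1 ≤ n) :
    ∀ L : List (Fin 4),
      L.count 0 + L.count 1 = n + 1 →
      L.count 2 + L.count 3 = n - 1 →
      ∀ x, applyOps A B C L μ x = 0 := by
  intro L h01 h23 x
  have h := (main A B C hA hB hC h3A h3B h3C μ hμ hμ2 L).2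
  rw [h01, h23] at h
  have hz : 2 + (n - 1) - (n + 1) = 0 := by omega
  rw [hz] at h
  exact h.zeroFn x
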